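/- arXiv:1906.09753 — 2 statements merged into one kernel-verified Lean document; each statement's English description precedes it below -/
import Mathlib

section
/- Fix a positive integer n. For partitions λ, μ ∈ H(1,n), define F_λ(μ) = {ν ∈ S(μ) : c̃_ν = c̃_λ}. Suppose λ₁ ≤ n, μ₁ ≤ n, and μ is obtained from λ by deleting one box. Then F_λ(μ) = {λ}. -/
/-- A partition: a weakly decreasing sequence of naturals indexed from 1 (value at 0 unused, set to 0). -/
def IsPartition (P : ℕ → ℕ) : Prop :=
  P 0 = 0 ∧ ∀ i, 1 ≤ i → P (i + 1) ≤ P i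

/-- `Q` is obtained from `P` by adding the box `(i,j)`. -/
def AddsBox (P Q : ℕ → ℕ) (i j : ℕ) : Prop :=
  1 ≤ i ∧ j = P i + 1 ∧ Q = Function.update P i (P i + 1) ∧ IsPartition Q

/-- `Q` is obtained from `P` by removing the box `(i,j)`. -/
def RemovesBox (P Q : ℕ → ℕ) (i j : ℕ) : Prop :=
  1 ≤ i ∧ j = P i ∧ 1 ≤ P i ∧ Q = Function.update P i (P i - 1) ∧ IsPartition Q

/-- `Q ∈ S(P)`. -/
def InS (P Q : ℕ → ℕ) : Prop :=
  Q = P ∨ (∃ i j, AddsBox P Q i j) ∨ (∃ i j, RemovesBox P Q i j)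

/-- `c̃_λ = Σ_{(i,j)∈λ} (2j − 2i + 1 − 2n)`. -/
def ctilde (n : ℕ) (P : ℕ → ℕ) (N : ℕ) : ℤ :=
  ∑ i ∈ Finset.Icc 1 N, ∑ j ∈ Finset.Icc 1 (P i),
    (2 * (j : ℤ) - 2 * (i : ℤ) + 1 - 2 * (n : ℤ))

/-- `F_λ(μ) = {ν ∈ S(μ) : c̃_ν = c̃_λ}`. -/
def Fset (n N : ℕ) (L M : ℕ → ℕ) : Set (ℕ → ℕ) :=
  {Q | InS M Q ∧ ctilde n Q N = ctilde n L N}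

/-!
Every box `(i, j)` with `j ≤ n` has negative weight `2(j - i) + 1 - 2n`, so deleting a box
from `μ` or leaving `μ` unchanged yields a strictly larger `c̃` than `c̃_λ`. Adding a box to `μ`
keeps `c̃_λ` only if the new box has the same content `j - i` as the box deleted from `λ`;
since the addable boxes of a partition lie on distinct diagonals, the new box is the deleted one.
-/

def boxWeight (n i j : ℕ) : ℤ := 2 * (j : ℤ) - 2 * (i : ℤ) + 1 - 2 * (n : ℤ)

lemma ctilde_eq_sum_boxWeight (n : ℕ) (P : ℕ → ℕ) (N : ℕ) :
    ctilde n P N = ∑ r ∈ Finset.Icc 1 N, ∑ k ∈ Finset.Icc 1 (P r), boxWeight n r k := rfl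

lemma boxWeight_neg {n i j : ℕ} (hi : 1 ≤ i) (hj : j ≤ n) : boxWeight n i j < 0 := by
  unfold boxWeight; omega

lemma IsPartition.antitone {P : ℕ → ℕ} (hP : IsPartition P) {a b : ℕ} (ha : 1 ≤ a)
    (hab : a ≤ b) : P b ≤ P a := by
  induction b, hab using Nat.le_induction with
  | base => exact le_rfl
  | succ b hb ih => exact (hP.2 b (ha.trans hb)).trans ih

lemma RemovesBox.addsBox {P Q : ℕ → ℕ} {i j : ℕ} (hP : IsPartition P)
    (h : RemovesBox P Q i j) : AddsBox Q P i j := by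
  obtain ⟨hi, rfl, hPi, rfl, -⟩ := h
  refine ⟨hi, by rw [Function.update_self]; omega, ?_, hP⟩
  funext r
  rcases eq_or_ne r i with rfl | hr
  · simp only [Function.update_self]; omega
  · simp [hr]

lemma AddsBox.ctilde_eq {P Q : ℕ → ℕ} {i j : ℕ} (h : AddsBox P Q i j) (n N : ℕ) :
    ctilde n Q N = ctilde n P N + if i ≤ N then boxWeight n i j else 0 := by
  obtain ⟨hi, rfl, rfl, -⟩ := h
  have hrow : ∀ r, ∑ k ∈ Finset.Icc 1 (Function.update P i (P i + 1) r), boxWeight n r k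
      = ∑ k ∈ Finset.Icc 1 (P r), boxWeight n r k
        + if i = r then boxWeight n i (P i + 1) else 0 := by
    intro r
    rcases eq_or_ne i r with rfl | hr
    · simp [Finset.sum_Icc_succ_top]
    · simp [hr, Function.update_of_ne hr.symm]
  simp only [ctilde_eq_sum_boxWeight, hrow, Finset.sum_add_distrib, Finset.sum_ite_eq,
    Finset.mem_Icc, hi, true_and]

lemma AddsBox.eq_of_content_eq {M P Q : ℕ → ℕ} {i j i' j' : ℕ} (hP : AddsBox M P i j)
    (hQ : AddsBox M Q i' j') (hc : (j : ℤ) - i = j' - i') : Q = P := by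
  obtain ⟨hi, rfl, rfl, hPpart⟩ := hP
  obtain ⟨hi', rfl, rfl, hQpart⟩ := hQ
  suffices i' = i by subst this; rfl
  by_contra hne
  rcases lt_or_gt_of_ne hne with hlt | hlt
  · have := hPpart.antitone hi' hlt.le
    simp only [Function.update_self, Function.update_of_ne hlt.ne] at this
    omega
  · have := hQpart.antitone hi hlt.le
    simp only [Function.update_self, Function.update_of_ne hlt.ne] at this
    omega

theorem Fset_small_general (n : ℕ) (P M : ℕ → ℕ) (hP : IsPartition P)
    (hP1 : P 1 ≤ n) (hM1 : M 1 ≤ n)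
    (hrem : ∃ i j, RemovesBox P M i j)
    (N : ℕ) (hN : ∀ r, N ≤ r → P r = 0) :
    Fset n N P M = {P} := by
  obtain ⟨i, j, hrem⟩ := hrem
  have hadd : AddsBox M P i j := hrem.addsBox hP
  obtain ⟨hi, rfl, hPi, -, hMpart⟩ := hrem
  have hiN : i ≤ N := by
    by_contra! h
    exact absurd (hN i h.le) (by omega)
  have hw : boxWeight n i (P i) < 0 := boxWeight_neg hi ((hP.antitone le_rfl hi).trans hP1)
  have hPct := hadd.ctilde_eq n N
  simp only [hiN, if_true] at hPct
  ext Q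
  refine ⟨fun ⟨hQS, hQct⟩ => ?_, fun hQ => hQ.symm ▸ ⟨Or.inr (Or.inl ⟨i, P i, hadd⟩), rfl⟩⟩
  rcases hQS with rfl | ⟨i', j', hQ⟩ | ⟨i', j', hQ⟩
  · omega
  · have hQct' := hQ.ctilde_eq n N
    split_ifs at hQct' with hi'N
    · refine hadd.eq_of_content_eq hQ ?_
      unfold boxWeight at hPct hQct'
      omega
    · omega
  · have hM := (hQ.addsBox hMpart).ctilde_eq n N
    have hw' : boxWeight n i' j' < 0 :=
      boxWeight_neg hQ.1 (hQ.2.1 ▸ (hMpart.antitone le_rfl hQ.1).trans hM1)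
    split_ifs at hM <;> omega

/-- If `λ₁ ≤ n`, `μ₁ ≤ n` and `μ` is obtained from `λ` by deleting one box, then `F_λ(μ) = {λ}`. -/
theorem Fset_small (n : ℕ) (hn : 1 ≤ n) (P M : ℕ → ℕ) (hP : IsPartition P)
    (hPH : P 2 ≤ n) (hMH : M 2 ≤ n)
    (hP1 : P 1 ≤ n) (hM1 : M 1 ≤ n)
    (hrem : ∃ i j, RemovesBox P M i j)
    (N : ℕ) (hN : ∀ r, N ≤ r → P r = 0) :
    Fset n N P M = {P} :=
  Fset_small_general n P M hP hP1 hM1 hrem N hN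
end

section
/- Fix a positive integer n. Let μ ∈ H(1,n) be a singular diagram and let λ be obtained from μ by adding one box to the first row. Then F_λ(μ^♯) = ∅ if λ is regular, and F_λ(μ^♯) = {λ^♯} if λ is singular. -/
/-- The conjugate partition. -/
def conj (P : ℕ → ℕ) (N : ℕ) (j : ℕ) : ℕ :=
  ((Finset.Icc 1 N).filter (fun i => j ≤ P i)).card

/-- `λ` is singular: `λ₁ − n = λ'_j + n − j` for some `1 ≤ j ≤ n`. -/
def Singular (n N : ℕ) (P : ℕ → ℕ) : Prop :=
  ∃ j, 1 ≤ j ∧ j ≤ n ∧ (P 1 : ℤ) - (n : ℤ) = (conj P N j : ℤ) + (n : ℤ) - (j : ℤ)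

/-- `r(λ) = |{r : j ≤ r ≤ n, λ'_r = λ'_j}|`. -/
def rnum (n N : ℕ) (P : ℕ → ℕ) (j : ℕ) : ℕ :=
  ((Finset.Icc j n).filter (fun r => conj P N r = conj P N j)).card

/-- `λ^♯`: delete `r` boxes from the first row and `r` boxes from the row of index `i₀`. -/
def sharp (P : ℕ → ℕ) (i₀ r : ℕ) : ℕ → ℕ :=
  Function.update (Function.update P i₀ (P i₀ - r)) 1
    (Function.update P i₀ (P i₀ - r) 1 - r)

open Classical in
/-- The `♯`-operation: `λ^♯` on singular diagrams, identity on regular ones. -/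
noncomputable def sharpOp (n N : ℕ) (P : ℕ → ℕ) : ℕ → ℕ :=
  if h : Singular n N P then
    sharp P (conj P N h.choose) (rnum n N P h.choose)
  else P

open Function Finset

namespace IsPartition

variable {P : ℕ → ℕ}

theorem antitoneOn (hP : IsPartition P) : AntitoneOn P (Set.Ici 1) :=
  antitoneOn_of_succ_le Set.ordConnected_Ici fun a _ ha _ => hP.2 a ha

theorem strictAntiOn_sub (hP : IsPartition P) :
    StrictAntiOn (fun i => (P i : ℤ) - i) (Set.Ici 1) :=
  strictAntiOn_of_succ_lt Set.ordConnected_Ici fun a _ ha _ => by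
    have := hP.2 a ha
    simp only [Order.succ_eq_add_one]
    push_cast
    omega

theorem update (hP : IsPartition P) {a v : ℕ} (ha : 1 ≤ a) (hsucc : P (a + 1) ≤ v)
    (hpred : 2 ≤ a → v ≤ P (a - 1)) : IsPartition (update P a v) := by
  refine ⟨by rw [update_of_ne (by omega)]; exact hP.1, fun i hi => ?_⟩
  by_cases hia : i = a
  · subst hia
    rwa [update_of_ne (by omega), update_self]
  by_cases hsa : i + 1 = a
  · subst hsa
    rw [update_self, update_of_ne hia]
    exact hpred (by omega)
  rw [update_of_ne hsa, update_of_ne hia]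
  exact hP.2 i hi

end IsPartition

theorem le_conj_iff {P : ℕ → ℕ} (hP : IsPartition P) {N : ℕ} (hN : ∀ r, N ≤ r → P r = 0)
    {i j : ℕ} (hj : 1 ≤ j) (hi : 1 ≤ i) : i ≤ conj P N j ↔ j ≤ P i := by
  constructor
  · intro h
    by_contra! hlt
    have hsub : (Icc 1 N).filter (fun x => j ≤ P x) ⊆ Icc 1 (i - 1) := by
      intro a ha
      simp only [mem_filter, mem_Icc] at ha ⊢
      refine ⟨ha.1.1, ?_⟩
      by_contra hai
      have : P a ≤ P i := hP.antitoneOn hi ha.1.1 (by omega)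
      omega
    have := card_le_card hsub
    rw [Nat.card_Icc] at this
    unfold conj at h
    omega
  · intro h
    have hiN : i < N := by
      by_contra hc
      have := hN i (by omega)
      omega
    have hsub : Icc 1 i ⊆ (Icc 1 N).filter (fun x => j ≤ P x) := by
      intro a ha
      simp only [mem_filter, mem_Icc] at ha ⊢
      exact ⟨⟨ha.1, by omega⟩, h.trans (hP.antitoneOn ha.1 (le_trans ha.1 ha.2) ha.2)⟩
    have := card_le_card hsub
    rw [Nat.card_Icc] at this
    unfold conj
    omega

theorem conj_antitone (P : ℕ → ℕ) (N : ℕ) : Antitone (conj P N) := fun _ _ h =>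
  card_le_card fun _ ha => by
    simp only [mem_filter] at ha ⊢
    exact ⟨ha.1, h.trans ha.2⟩

theorem conj_update_add_one (P : ℕ → ℕ) (N : ℕ) {a k : ℕ} (hk : k ≤ P a) :
    conj (update P a (P a + 1)) N k = conj P N k := by
  unfold conj
  congr 1
  refine filter_congr fun x _ => ?_
  by_cases hx : x = a
  · subst hx
    rw [update_self]
    omega
  · rw [update_of_ne hx]

section Conjugate

variable {P : ℕ → ℕ} {N : ℕ} {j : ℕ}

theorem le_apply_conj (hP : IsPartition P) (hN : ∀ r, N ≤ r → P r = 0) (hj : 1 ≤ j)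
    (hj1 : j ≤ P 1) : j ≤ P (conj P N j) :=
  (le_conj_iff hP hN hj ((le_conj_iff hP hN hj le_rfl).2 hj1)).1 le_rfl

theorem apply_conj_add_one_lt (hP : IsPartition P) (hN : ∀ r, N ≤ r → P r = 0) (hj : 1 ≤ j) :
    P (conj P N j + 1) < j := by
  by_contra! h
  have := (le_conj_iff hP hN hj (Nat.le_add_left 1 _)).2 h
  omega

theorem conj_sub_one_eq (hP : IsPartition P) (hN : ∀ r, N ≤ r → P r = 0)
    (hj : P (conj P N j + 1) + 2 ≤ j) : conj P N (j - 1) = conj P N j := by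
  refine le_antisymm ?_ (conj_antitone P N (Nat.sub_le j 1))
  by_contra! h
  have := (le_conj_iff hP hN (show 1 ≤ j - 1 by omega) (Nat.le_add_left 1 _)).1 h
  omega

theorem rnum_eq (hP : IsPartition P) (hN : ∀ r, N ≤ r → P r = 0) (n : ℕ) (hj : 1 ≤ j)
    (hconj : 1 ≤ conj P N j) : rnum n N P j = min n (P (conj P N j)) + 1 - j := by
  have hrows : (Icc j n).filter (fun r => conj P N r = conj P N j) =
      Icc j (min n (P (conj P N j))) := by
    ext k
    simp only [mem_filter, mem_Icc, le_min_iff]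
    constructor
    · rintro ⟨⟨hjk, hkn⟩, hk⟩
      exact ⟨hjk, hkn, (le_conj_iff hP hN (by omega) hconj).1 hk.ge⟩
    · rintro ⟨hjk, hkn, hk⟩
      exact ⟨⟨hjk, hkn⟩, le_antisymm (conj_antitone P N hjk)
        ((le_conj_iff hP hN (by omega) hconj).2 hk)⟩
  rw [rnum, hrows, Nat.card_Icc]

end Conjugate

def rowContent (n i m : ℕ) : ℤ := m ^ 2 + m * (2 - 2 * i - 2 * n)

theorem sum_Icc_eq_rowContent (n i m : ℕ) :
    ∑ j ∈ Icc 1 m, (2 * (j : ℤ) - 2 * i + 1 - 2 * n) = rowContent n i m := by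
  induction m with
  | zero => simp [rowContent]
  | succ m ih =>
    rw [sum_Icc_succ_top (by omega), ih, rowContent, rowContent]
    push_cast
    ring

theorem rowContent_succ (n i m : ℕ) :
    rowContent n i (m + 1) = rowContent n i m + (2 * m + 3 - 2 * i - 2 * n) := by
  simp only [rowContent]
  push_cast
  ring

theorem ctilde_eq_sum_rowContent (n : ℕ) (Q : ℕ → ℕ) (N : ℕ) :
    ctilde n Q N = ∑ i ∈ Icc 1 N, rowContent n i (Q i) :=
  sum_congr rfl fun i _ => sum_Icc_eq_rowContent n i (Q i)

theorem ctilde_update (n : ℕ) (Q : ℕ → ℕ) {N a : ℕ} (ha : a ∈ Icc 1 N) (v : ℕ) :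
    ctilde n (update Q a v) N = ctilde n Q N + rowContent n a v - rowContent n a (Q a) := by
  have hupd : (fun i => rowContent n i (update Q a v i)) =
      update (fun i => rowContent n i (Q i)) a (rowContent n a v) :=
    funext fun i => apply_update (fun i => rowContent n i) Q a v i
  rw [ctilde_eq_sum_rowContent, ctilde_eq_sum_rowContent, hupd, sum_update_of_mem ha,
    sum_eq_add_sum_sdiff_singleton_of_mem ha]
  ring

theorem AddsBox.ctilde_eq_s13 {κ Q : ℕ → ℕ} {N i c : ℕ} (n : ℕ) (hN : ∀ r, N ≤ r → κ r = 0)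
    (hN1 : 1 ≤ N) (h : AddsBox κ Q i c) :
    ctilde n Q N = ctilde n κ N + (2 * κ i + 3 - 2 * i - 2 * n) := by
  obtain ⟨hi, -, rfl, hQ⟩ := h
  have hiN : i ≤ N := by
    by_contra! hNi
    have hrow := hQ.2 (i - 1) (by omega)
    rw [Nat.sub_add_cancel (by omega), update_self, update_of_ne (by omega),
      hN (i - 1) (by omega)] at hrow
    omega
  rw [ctilde_update n κ (mem_Icc.2 ⟨hi, hiN⟩), rowContent_succ]
  ring

theorem RemovesBox.ctilde_eq_s13 {κ Q : ℕ → ℕ} {N i c : ℕ} (n : ℕ) (hN : ∀ r, N ≤ r → κ r = 0)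
    (h : RemovesBox κ Q i c) :
    ctilde n Q N = ctilde n κ N - (2 * κ i + 1 - 2 * i - 2 * n) := by
  obtain ⟨hi, -, hpos, rfl, -⟩ := h
  have hiN : i ≤ N := by
    by_contra! hNi
    have := hN i hNi.le
    omega
  rw [ctilde_update n κ (mem_Icc.2 ⟨hi, hiN⟩)]
  have := rowContent_succ n i (κ i - 1)
  rw [Nat.sub_add_cancel hpos] at this
  rw [this, Nat.cast_sub hpos]
  ring

def IsSingularIndex (n N : ℕ) (P : ℕ → ℕ) (j : ℕ) : Prop :=
  1 ≤ j ∧ j ≤ n ∧ (P 1 : ℤ) - n = conj P N j + n - j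

namespace IsSingularIndex

variable {n N j : ℕ} {M : ℕ → ℕ}

theorem unique {k : ℕ} (hj : IsSingularIndex n N M j) (hk : IsSingularIndex n N M k) : j = k := by
  obtain ⟨-, -, hj⟩ := hj
  obtain ⟨-, -, hk⟩ := hk
  rcases lt_trichotomy j k with h | h | h
  · have := conj_antitone M N h.le
    omega
  · exact h
  · have := conj_antitone M N h.le
    omega

theorem sharpOp_eq (hj : IsSingularIndex n N M j) :
    sharpOp n N M = sharp M (conj M N j) (rnum n N M j) := by
  have hs : Singular n N M := ⟨j, hj⟩
  rw [sharpOp, dif_pos hs, hj.unique (k := hs.choose) hs.choose_spec]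

theorem le_apply_one (hj : IsSingularIndex n N M j) : n ≤ M 1 := by
  obtain ⟨-, hjn, h⟩ := hj
  omega

theorem one_le_conj (hM : IsPartition M) (hN : ∀ r, N ≤ r → M r = 0)
    (hj : IsSingularIndex n N M j) : 1 ≤ conj M N j :=
  (le_conj_iff hM hN hj.1 le_rfl).2 (hj.2.1.trans hj.le_apply_one)

theorem le_apply_conj (hM : IsPartition M) (hN : ∀ r, N ≤ r → M r = 0)
    (hj : IsSingularIndex n N M j) : j ≤ M (conj M N j) :=
  _root_.le_apply_conj hM hN hj.1 (hj.2.1.trans hj.le_apply_one)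

theorem conj_lt (hM : IsPartition M) (hN : ∀ r, N ≤ r → M r = 0)
    (hj : IsSingularIndex n N M j) : conj M N j < N := by
  by_contra! h
  have := hN _ h
  have := hj.le_apply_conj hM hN
  have := hj.1
  omega

theorem sharpOp_eq_update (hM : IsPartition M) (hN : ∀ r, N ≤ r → M r = 0) (hM2 : M 2 ≤ n)
    (hj : IsSingularIndex n N M j) :
    sharpOp n N M = update (update M 1 (M 1 - rnum n N M j)) (conj M N j) (j - 1) := by
  have hconj := hj.one_le_conj hM hN
  have hr := rnum_eq hM hN n hj.1 hconj
  have hrow := hj.le_apply_conj hM hN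
  rw [hj.sharpOp_eq, sharp]
  obtain ⟨hj1, hjn, hjeq⟩ := hj
  set i₀ := conj M N j
  rcases eq_or_ne i₀ 1 with h1 | h1
  · rw [h1] at hr hjeq ⊢
    simp only [update_idem, update_self]
    congr 1
    omega
  · rw [update_of_ne (Ne.symm h1), update_comm h1]
    have : M i₀ ≤ n := (hM.antitoneOn (show 1 ≤ 2 by omega) (show 1 ≤ i₀ by omega)
      (show 2 ≤ i₀ by omega)).trans hM2
    congr 1
    omega

theorem isPartition_sharpOp (hM : IsPartition M) (hN : ∀ r, N ≤ r → M r = 0) (hM2 : M 2 ≤ n)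
    (hj : IsSingularIndex n N M j) : IsPartition (sharpOp n N M) := by
  have hconj := hj.one_le_conj hM hN
  have hr := rnum_eq hM hN n hj.1 hconj
  have hrow := hj.le_apply_conj hM hN
  have hnext := apply_conj_add_one_lt hM hN (N := N) hj.1
  rw [hj.sharpOp_eq_update hM hN hM2]
  obtain ⟨hj1, hjn, hjeq⟩ := hj
  set i₀ := conj M N j
  rcases eq_or_ne i₀ 1 with h1 | h1
  · rw [h1] at hnext ⊢
    rw [update_idem]
    exact hM.update le_rfl (by omega) (by omega)
  have hMi₀ : M i₀ ≤ n := (hM.antitoneOn (show 1 ≤ 2 by omega) (show 1 ≤ i₀ by omega)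
    (show 2 ≤ i₀ by omega)).trans hM2
  have hfirst : IsPartition (update M 1 (M 1 - rnum n N M j)) :=
    hM.update le_rfl (by simp only [Nat.reduceAdd]; omega) (by omega)
  refine hfirst.update hconj ?_ fun _ => ?_
  · rw [update_of_ne (by omega)]
    omega
  · rcases eq_or_ne (i₀ - 1) 1 with h | h
    · rw [h, update_self]
      omega
    · rw [update_of_ne h]
      have := hM.antitoneOn (show 1 ≤ i₀ - 1 by omega) hconj (Nat.sub_le i₀ 1)
      omega

theorem ctilde_sharpOp (hM : IsPartition M) (hN : ∀ r, N ≤ r → M r = 0) (hM2 : M 2 ≤ n)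
    (hj : IsSingularIndex n N M j) : ctilde n (sharpOp n N M) N = ctilde n M N := by
  have hconj := hj.one_le_conj hM hN
  have hr := rnum_eq hM hN n hj.1 hconj
  have hrow := hj.le_apply_conj hM hN
  have hi₀N : conj M N j ∈ Icc 1 N := mem_Icc.2 ⟨hconj, (hj.conj_lt hM hN).le⟩
  rw [hj.sharpOp_eq_update hM hN hM2]
  obtain ⟨hj1, hjn, hjeq⟩ := hj
  set i₀ := conj M N j
  have h1N : 1 ∈ Icc 1 N := mem_Icc.2 ⟨le_rfl, (mem_Icc.1 hi₀N).1.trans (mem_Icc.1 hi₀N).2⟩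
  rcases eq_or_ne i₀ 1 with h1 | h1
  · rw [h1] at hjeq ⊢
    rw [update_idem, ctilde_update n M h1N, rowContent, rowContent,
      show ((j - 1 : ℕ) : ℤ) = j - 1 by omega, show (M 1 : ℤ) = 1 + 2 * n - j by omega]
    ring
  have hMi₀ : M i₀ ≤ n := (hM.antitoneOn (show 1 ≤ 2 by omega) (show 1 ≤ i₀ by omega)
    (show 2 ≤ i₀ by omega)).trans hM2
  rw [ctilde_update n _ hi₀N, ctilde_update n M h1N, update_of_ne h1, rowContent, rowContent,
    rowContent, rowContent, show ((j - 1 : ℕ) : ℤ) = j - 1 by omega,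
    show ((M 1 - rnum n N M j : ℕ) : ℤ) = M 1 - rnum n N M j by omega,
    show (M 1 : ℤ) = i₀ + 2 * n - j by omega, show (M i₀ : ℤ) = j + rnum n N M j - 1 by omega]
  ring

theorem sharpOp_apply_conj (hM : IsPartition M) (hN : ∀ r, N ≤ r → M r = 0) (hM2 : M 2 ≤ n)
    (hj : IsSingularIndex n N M j) : sharpOp n N M (conj M N j) = j - 1 := by
  rw [hj.sharpOp_eq_update hM hN hM2, update_self]

theorem sharpOp_apply_of_ne (hM : IsPartition M) (hN : ∀ r, N ≤ r → M r = 0) (hM2 : M 2 ≤ n)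
    (hj : IsSingularIndex n N M j) {x : ℕ} (h1 : x ≠ 1) (hx : x ≠ conj M N j) :
    sharpOp n N M x = M x := by
  rw [hj.sharpOp_eq_update hM hN hM2, update_of_ne hx, update_of_ne h1]

theorem sharpOp_apply_one_lt (hM : IsPartition M) (hN : ∀ r, N ≤ r → M r = 0) (hM2 : M 2 ≤ n)
    (hj : IsSingularIndex n N M j) : sharpOp n N M 1 < M 1 := by
  have hr := rnum_eq hM hN n hj.1 (hj.one_le_conj hM hN)
  have hrow := hj.le_apply_conj hM hN
  have hM1 := hj.le_apply_one
  rw [hj.sharpOp_eq_update hM hN hM2]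
  obtain ⟨hj1, hjn, -⟩ := hj
  rcases eq_or_ne (conj M N j) 1 with h1 | h1
  · rw [h1, update_self]
    omega
  · rw [update_of_ne (Ne.symm h1), update_self]
    omega

theorem update_first_row (hM : IsPartition M) (hN : ∀ r, N ≤ r → M r = 0)
    (hj : IsSingularIndex n N M j) (hc : M (conj M N j + 1) + 2 ≤ j) :
    IsSingularIndex n N (update M 1 (M 1 + 1)) (j - 1) := by
  have hM1 := hj.le_apply_one
  obtain ⟨hj1, hjn, hjeq⟩ := hj
  refine ⟨by omega, by omega, ?_⟩
  rw [conj_update_add_one M N (by omega), update_self, conj_sub_one_eq hM hN hc]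
  push_cast
  omega

theorem singular_update_iff (hM : IsPartition M) (hN : ∀ r, N ≤ r → M r = 0)
    (hj : IsSingularIndex n N M j) :
    Singular n N (update M 1 (M 1 + 1)) ↔ M (conj M N j + 1) + 2 ≤ j := by
  have hM1 := hj.le_apply_one
  obtain ⟨hj1, hjn, hjeq⟩ := hj
  constructor
  · rintro ⟨k, hk1, hkn, hke⟩
    rw [conj_update_add_one M N (by omega), update_self] at hke
    push_cast at hke
    have hkj : k + 1 = j ∧ conj M N k = conj M N j := by
      rcases le_or_gt j k with h | h
      · have := conj_antitone M N h
        omega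
      · have := conj_antitone M N h.le
        omega
    have := apply_conj_add_one_lt hM hN (N := N) hk1
    rw [hkj.2] at this
    omega
  · exact fun hc => ⟨j - 1, update_first_row hM hN ⟨hj1, hjn, hjeq⟩ hc⟩

theorem sharpOp_update_first_row (hM : IsPartition M) (hN : ∀ r, N ≤ r → M r = 0)
    (hM2 : M 2 ≤ n) (hj : IsSingularIndex n N M j) (hP : IsPartition (update M 1 (M 1 + 1)))
    (hc : M (conj M N j + 1) + 2 ≤ j) :
    sharpOp n N (update M 1 (M 1 + 1)) = update (sharpOp n N M) (conj M N j) (j - 2) := by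
  have hM1 := hj.le_apply_one
  have hconj := hj.one_le_conj hM hN
  have hjn := hj.2.1
  have hrow := hj.le_apply_conj hM hN
  have hNP : ∀ r, N ≤ r → update M 1 (M 1 + 1) r = 0 := fun r hr => by
    have := hj.conj_lt hM hN
    rw [update_of_ne (by omega), hN r hr]
  have hj' := hj.update_first_row hM hN hc
  have hconj' : conj (update M 1 (M 1 + 1)) N (j - 1) = conj M N j := by
    rw [conj_update_add_one M N (by omega), conj_sub_one_eq hM hN hc]
  have hr := rnum_eq hM hN n hj.1 hconj
  have hr' := rnum_eq hP hNP n hj'.1 (hconj' ▸ hconj)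
  have hmin : min n (update M 1 (M 1 + 1) (conj M N j)) = min n (M (conj M N j)) := by
    rcases eq_or_ne (conj M N j) 1 with h1 | h1
    · rw [h1, update_self]
      omega
    · rw [update_of_ne h1]
  rw [hj'.sharpOp_eq_update hP hNP (by rwa [update_of_ne (by omega)]),
    hj.sharpOp_eq_update hM hN hM2, update_idem, update_idem, update_self, hconj']
  rw [hconj', hmin] at hr'
  rw [show M 1 + 1 - rnum n N (update M 1 (M 1 + 1)) (j - 1) = M 1 - rnum n N M j by omega,
    show j - 1 - 1 = j - 2 by omega]

theorem mem_Fset_sharpOp_iff (hM : IsPartition M) (hN : ∀ r, N ≤ r → M r = 0)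
    (hM2 : M 2 ≤ n) (hj : IsSingularIndex n N M j) (hP : IsPartition (update M 1 (M 1 + 1)))
    {Q : ℕ → ℕ} :
    Q ∈ Fset n N (update M 1 (M 1 + 1)) (sharpOp n N M) ↔
      M (conj M N j + 1) + 2 ≤ j ∧ Q = update (sharpOp n N M) (conj M N j) (j - 2) := by
  have hconj := hj.one_le_conj hM hN
  have hlt := hj.conj_lt hM hN
  have hκpart := hj.isPartition_sharpOp hM hN hM2
  have hκct := hj.ctilde_sharpOp hM hN hM2
  have hκi₀ := hj.sharpOp_apply_conj hM hN hM2
  have hκ1 := hj.sharpOp_apply_one_lt hM hN hM2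
  have hκnext := hj.sharpOp_apply_of_ne hM hN hM2 (x := conj M N j + 1) (by omega) (by omega)
  have hκN : ∀ r, N ≤ r → sharpOp n N M r = 0 := fun r hr =>
    (hj.sharpOp_apply_of_ne hM hN hM2 (by omega) (by omega)).trans (hN r hr)
  have hctP := AddsBox.ctilde_eq_s13 n hN (by omega) ⟨le_rfl, rfl, rfl, hP⟩
  obtain ⟨hj1, hjn, hjeq⟩ := hj
  set κ := sharpOp n N M
  set i₀ := conj M N j
  constructor
  · rintro ⟨hS, hct⟩
    rw [hctP] at hct
    rcases hS with rfl | ⟨i, c, hadd⟩ | ⟨i, c, hrem⟩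
    · omega
    · rw [hadd.ctilde_eq_s13 n hκN (by omega), hκct] at hct
      have hi := hadd.1
      have := hκpart.antitoneOn (le_refl 1) hi hi
      omega
    · rw [hrem.ctilde_eq_s13 n hκN, hκct] at hct
      have hi : i = i₀ := hκpart.strictAntiOn_sub.injOn hrem.1 hconj (by omega)
      obtain ⟨-, rfl, hpos, rfl, hQ⟩ := hrem
      subst hi
      have := hQ.2 i₀ hconj
      rw [update_self, update_of_ne (by omega), hκnext] at this
      exact ⟨by omega, by rw [hκi₀, show j - 1 - 1 = j - 2 by omega]⟩
  · rintro ⟨hc, rfl⟩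
    have hrem : RemovesBox κ (update κ i₀ (j - 2)) i₀ (κ i₀) := by
      refine ⟨hconj, rfl, by omega, by rw [hκi₀, show j - 1 - 1 = j - 2 by omega], ?_⟩
      refine hκpart.update hconj (by omega) fun _ => ?_
      have := hκpart.antitoneOn (show 1 ≤ i₀ - 1 by omega) hconj (Nat.sub_le i₀ 1)
      omega
    refine ⟨Or.inr (Or.inr ⟨i₀, κ i₀, hrem⟩), ?_⟩
    rw [hrem.ctilde_eq_s13 n hκN, hκct, hctP]
    omega

end IsSingularIndex

theorem Fset_sharp_general (n : ℕ) (M : ℕ → ℕ) (hM : IsPartition M)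
    (hMH : M 2 ≤ n) (N : ℕ) (hN : ∀ r, N ≤ r → M r = 0)
    (hMsing : Singular n N M)
    (P : ℕ → ℕ) (hP : AddsBox M P 1 (M 1 + 1)) :
    (¬ Singular n N P → Fset n N P (sharpOp n N M) = (∅ : Set (ℕ → ℕ))) ∧
    (Singular n N P → Fset n N P (sharpOp n N M) = {sharpOp n N P}) := by
  obtain ⟨j, hj⟩ : ∃ j, IsSingularIndex n N M j := hMsing
  obtain ⟨-, -, rfl, hP⟩ := hP
  have hsing := hj.singular_update_iff hM hN
  refine ⟨fun hreg => ?_, fun hs => ?_⟩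
  · ext Q
    rw [hj.mem_Fset_sharpOp_iff hM hN hMH hP]
    exact iff_of_false (fun h => hreg (hsing.2 h.1)) (Set.notMem_empty Q)
  · ext Q
    rw [hj.mem_Fset_sharpOp_iff hM hN hMH hP, hj.sharpOp_update_first_row hM hN hMH hP
      (hsing.1 hs), Set.mem_singleton_iff, and_iff_right (hsing.1 hs)]

/-- Let `μ ∈ H(1,n)` be singular and `λ` obtained from `μ` by adding one box to the first row.
Then `F_λ(μ^♯) = ∅` if `λ` is regular, and `F_λ(μ^♯) = {λ^♯}` if `λ` is singular. -/
theorem Fset_sharp (n : ℕ) (hn : 1 ≤ n) (M : ℕ → ℕ) (hM : IsPartition M)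
    (hMH : M 2 ≤ n) (N : ℕ) (hN : ∀ r, N ≤ r → M r = 0)
    (hMsing : Singular n N M)
    (P : ℕ → ℕ) (hP : AddsBox M P 1 (M 1 + 1)) :
    (¬ Singular n N P → Fset n N P (sharpOp n N M) = (∅ : Set (ℕ → ℕ))) ∧
    (Singular n N P → Fset n N P (sharpOp n N M) = {sharpOp n N P}) :=
  Fset_sharp_general n M hM hMH N hN hMsing P hP
end
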